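/- arXiv:1101.4286 — 3 statements merged into one kernel-verified Lean document; each statement's English description precedes it below -/
import Mathlib

section
/- Let A be a finite abelian group, H a finite group acting on A by automorphisms, and G = A ⋊ H the corresponding semidirect product. Let w be an element of the free group on n generators. If the number of n-tuples from H satisfying w = 1 is at least |H|^(n-1), then the number of n-tuples from G satisfying w = 1 is at least |G|^(n-1). -/
/-!
Write `g ∈ (A ⋊ H)ⁿ` as `gᵢ = (aᵢ, hᵢ)`. The `H`-component of `w(g)` is `w(h)`, and for a fixed
`h` the `A`-component of `w(g)` is a homomorphism `Aⁿ → A` in `a`, because `A` is abelian and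
`H` acts by automorphisms. So the solutions of `w = 1` in `A ⋊ H` fibre over the solutions
`h` in `H`, each fibre being the kernel of a homomorphism `Aⁿ → A`, of size at least
`|A|ⁿ⁻¹`. Summing over the at least `|H|ⁿ⁻¹` solutions in `H` gives `|A|ⁿ⁻¹ |H|ⁿ⁻¹ = |G|ⁿ⁻¹`.
-/

theorem MonoidHom.card_le_card_ker_mul {G A : Type*} [Group G] [Group A] [Finite A]
    (f : G →* A) : Nat.card G ≤ Nat.card f.ker * Nat.card A := by
  rw [← f.ker.card_mul_index, Subgroup.index_ker]
  exact Nat.mul_le_mul_left _ (Nat.card_le_card_of_injective _ Subtype.val_injective)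

theorem MonoidHom.pow_pred_card_le_card_ker {ι A : Type*} [Finite ι] [Group A] [Finite A]
    (f : (ι → A) →* A) : Nat.card A ^ (Nat.card ι - 1) ≤ Nat.card f.ker := by
  rcases Nat.eq_zero_or_pos (Nat.card ι) with hι | hι
  · rw [hι, Nat.zero_sub, pow_zero]
    exact Nat.card_pos
  · refine Nat.le_of_mul_le_mul_right ?_ (Nat.card_pos (α := A))
    calc Nat.card A ^ (Nat.card ι - 1) * Nat.card A = Nat.card (ι → A) := by
          rw [← pow_succ, Nat.sub_add_cancel hι, Nat.card_fun]
      _ ≤ Nat.card f.ker * Nat.card A := f.card_le_card_ker_mul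

namespace SemidirectProduct

variable {N G ι : Type*} [Group G]

theorem right_freeGroupLift [Group N] {φ : G →* MulAut N} (g : ι → N ⋊[φ] G)
    (w : FreeGroup ι) : (FreeGroup.lift g w).right = FreeGroup.lift (fun i => (g i).right) w :=
  FreeGroup.lift_unique (rightHom.comp (FreeGroup.lift g)) (fun _ => by simp [rightHom])

variable [CommGroup N] (φ : G →* MulAut N)

theorem left_freeGroupLift_mk_mul (h : ι → G) (a b : ι → N) (w : FreeGroup ι) :
    (FreeGroup.lift (fun i => (⟨a i * b i, h i⟩ : N ⋊[φ] G)) w).left =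
      (FreeGroup.lift (fun i => (⟨a i, h i⟩ : N ⋊[φ] G)) w).left *
        (FreeGroup.lift (fun i => (⟨b i, h i⟩ : N ⋊[φ] G)) w).left := by
  induction w using FreeGroup.induction_on with
  | C1 => simp
  | of x => simp only [FreeGroup.lift_apply_of]
  | inv_of x _ =>
    simp only [map_inv, FreeGroup.lift_apply_of, inv_left, mul_inv, map_mul]
  | mul u v hu hv =>
    simp only [map_mul, mul_left, right_freeGroupLift, hu, hv]
    exact mul_mul_mul_comm ..

def wordLeftHom (h : ι → G) (w : FreeGroup ι) : (ι → N) →* N :=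
  MonoidHom.mk' (fun a => (FreeGroup.lift (fun i => (⟨a i, h i⟩ : N ⋊[φ] G)) w).left)
    (left_freeGroupLift_mk_mul φ h · · w)

def freeGroupLiftEqOneEquiv (w : FreeGroup ι) :
    {g : ι → N ⋊[φ] G // FreeGroup.lift g w = 1} ≃
      Σ h : {h : ι → G // FreeGroup.lift h w = 1}, (wordLeftHom φ h.1 w).ker where
  toFun g := ⟨⟨fun i => (g.1 i).right, by rw [← right_freeGroupLift, g.2, one_right]⟩,
    ⟨fun i => (g.1 i).left, by
      change (FreeGroup.lift g.1 w).left = 1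
      rw [g.2, one_left]⟩⟩
  invFun p := ⟨fun i => ⟨p.2.1 i, p.1.1 i⟩,
    SemidirectProduct.ext p.2.2 (by rw [right_freeGroupLift]; exact p.1.2)⟩
  left_inv _ := rfl
  right_inv _ := rfl

end SemidirectProduct

/-- If `A` is a finite abelian group, `H` a finite group acting on `A`
by automorphisms via `φ`, and `G = A ⋊[φ] H`, and if the number of `n`-tuples from `H`
satisfying the word `w = 1` is at least `|H|^(n-1)`, then the number of `n`-tuples
from `G` satisfying `w = 1` is at least `|G|^(n-1)`. -/
theorem semidirect_word_count {A H : Type*} [CommGroup A] [Group H]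
    [Finite A] [Finite H] (φ : H →* MulAut A)
    (n : ℕ) (w : FreeGroup (Fin n))
    (hH : Nat.card {h : Fin n → H // (FreeGroup.lift h) w = 1} ≥ Nat.card H ^ (n - 1)) :
    Nat.card {g : Fin n → A ⋊[φ] H // (FreeGroup.lift g) w = 1}
      ≥ Nat.card (A ⋊[φ] H) ^ (n - 1) := by
  have := Fintype.ofFinite {h : Fin n → H // FreeGroup.lift h w = 1}
  rw [Nat.card_congr (SemidirectProduct.freeGroupLiftEqOneEquiv φ w), Nat.card_sigma,
    SemidirectProduct.card, mul_pow]
  calc Nat.card A ^ (n - 1) * Nat.card H ^ (n - 1)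
      ≤ Nat.card A ^ (n - 1) * Nat.card {h : Fin n → H // FreeGroup.lift h w = 1} := by
        gcongr
    _ = ∑ _h : {h : Fin n → H // FreeGroup.lift h w = 1}, Nat.card A ^ (n - 1) := by
        simp [Nat.card_eq_fintype_card, mul_comm]
    _ ≤ ∑ h : {h : Fin n → H // FreeGroup.lift h w = 1},
          Nat.card (SemidirectProduct.wordLeftHom φ h.1 w).ker :=
        Finset.sum_le_sum fun h _ => by
          simpa using (SemidirectProduct.wordLeftHom φ h.1 w).pow_pred_card_le_card_ker
end

section
/- Let G be a finite abelian group and w an element of the free group on n generators. Then the number of n-tuples (g_1,...,g_n) in G^n satisfying w(g_1,...,g_n) = 1 is at least |G|^(n-1). -/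
/-!
Over an abelian group, `g ↦ w(g)` is a homomorphism `Gⁿ → G`, so the solutions of `w = 1` form
its kernel. The image has at most `|G|` elements, hence the kernel has at least
`|G|ⁿ⁻¹` elements.
-/

namespace FreeGroup

variable {α G : Type*} [CommGroup G]

def evalWord (w : FreeGroup α) : (α → G) →* G :=
  lift (Pi.evalMonoidHom (fun _ : α => G)) w

theorem evalWord_apply (w : FreeGroup α) (g : α → G) : evalWord w g = lift g w := by
  induction w using FreeGroup.induction_on <;> simp_all [evalWord]

end FreeGroup

theorem MonoidHom.card_le_card_ker_mul_card {H K : Type*} [Group H] [Group K] [Finite K]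
    (f : H →* K) : Nat.card H ≤ Nat.card f.ker * Nat.card K := by
  rw [← f.ker.card_mul_index, Subgroup.index_ker]
  exact Nat.mul_le_mul_left _ (Nat.card_le_card_of_injective _ Subtype.val_injective)

/-- For a finite abelian group `G` and a word `w` in the free group on
`n` generators, the number of `n`-tuples satisfying `w = 1` is at least `|G|^(n-1)`. -/
theorem abelian_word_count {G : Type*} [CommGroup G] [Finite G]
    (n : ℕ) (w : FreeGroup (Fin n)) :
    Nat.card {g : Fin n → G // (FreeGroup.lift g) w = 1} ≥ Nat.card G ^ (n - 1) := by
  have hsolutions : Nat.card {g : Fin n → G // FreeGroup.lift g w = 1}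
      = Nat.card (FreeGroup.evalWord (G := G) w).ker :=
    Nat.card_congr <| Equiv.subtypeEquivRight fun g => by
      rw [MonoidHom.mem_ker, FreeGroup.evalWord_apply]
  rw [hsolutions, ge_iff_le]
  cases n with
  | zero => exact Nat.card_pos
  | succ m =>
    have hbound := (FreeGroup.evalWord (G := G) w).card_le_card_ker_mul_card
    rw [Nat.card_fun, Nat.card_fin, pow_succ] at hbound
    exact Nat.le_of_mul_le_mul_right hbound Nat.card_pos
end

section
/- Let p be a prime, m a natural number, and let w = x_1^(α_1) · x_2^(α_2) ⋯ x_n^(α_n) be an element of the free group F_n on generators x_1,...,x_n, where α_1,...,α_n are integers. Then for any finite p-group G of nilpotency class at most 2 whose exponent divides p^m, there exist a natural number l, integers β_{ij} for 1 < i < j ≤ n, and integers γ_i for 2 ≤ i ≤ n, such that w is G-equivalent to the word v = x_1^(p^l) · (∏_{1 < i < j ≤ n} [x_i, x_j]^(β_{ij})) · (∏_{i=2}^{n} [x_1, x_i]^(γ_i)) in F_n, where [x,y] = x⁻¹y⁻¹xy. -/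
/-!
In a group of class at most 2 commutators are central and bilinear, so the word map of any
element of `[F_n, F_n]` is the word map of a product of powers of the basic commutators
`[x_i, x_j]`: words with the same image in the abelianization of `F_n` have word maps that differ
by such a product.

Choose `s_i`, invertible modulo `p^m`, with `s_i α_i ≡ p^(l_i)`; substituting `x_i ↦ x_i^(s_i)`
permutes `G^n` and turns `w` into `∏ x_i^(p^(l_i))`. If `l_k` is the least `l_i` and
`q = ∏_{i ≠ k} x_i^(p^(l_i - l_k))`, this word is `(x_k q)^(p^(l_k))` modulo `[F_n, F_n]`.
The automorphism `x_k ↦ x_k q⁻¹` of `F_n`, followed by swapping `x_k` and `x_1`, sends it to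
`x_1^(p^(l_k))`, and substituting along an automorphism of `F_n` permutes `G^n`.
-/

open Subgroup
open scoped commutatorElement

section ClassTwo

variable {H : Type*} [Group H] (hH : commutator H ≤ center H)
include hH

theorem commutatorElement_mem_center (a b : H) : ⁅a, b⁆ ∈ center H :=
  hH (commutator_mem_commutator (mem_top a) (mem_top b))

theorem commutatorElement_mul_left_of_le_center (a b c : H) :
    ⁅a * b, c⁆ = ⁅a, c⁆ * ⁅b, c⁆ := by
  have hbc := mem_center_iff.mp (commutatorElement_mem_center hH b c)
  rw [commutatorElement_mul_left_eq_conj_mul, hbc, mul_inv_cancel_right, hbc]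

theorem commutatorElement_inv_left_of_le_center (a b : H) : ⁅a⁻¹, b⁆ = ⁅a, b⁆⁻¹ := by
  rw [commutatorElement_inv_left, mul_assoc,
    ← (mem_center_iff.mp (commutatorElement_mem_center hH b a) a), inv_mul_cancel_left,
    commutatorElement_inv]

theorem commutatorElement_inv_inv_of_le_center (a b : H) : ⁅a⁻¹, b⁻¹⁆ = ⁅a, b⁆ := by
  rw [commutatorElement_inv_left_of_le_center hH, ← commutatorElement_inv,
    commutatorElement_inv_left_of_le_center hH, inv_inv, commutatorElement_inv]

theorem commutator_closure_le_of_le_center {S : Set H} {C : Subgroup H}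
    (hS : ∀ s ∈ S, ∀ t ∈ S, ⁅s, t⁆ ∈ C) : ⁅closure S, closure S⁆ ≤ C := by
  have symm : ∀ {x y : H}, ⁅x, y⁆ ∈ C → ⁅y, x⁆ ∈ C := fun h => by
    rw [← commutatorElement_inv]; exact C.inv_mem h
  rw [commutator_le]
  intro x hx y hy
  induction hx, hy using closure_induction₂ with
  | mem s t hs ht => exact hS s hs t ht
  | one_left y _ => simp
  | one_right x _ => simp
  | mul_left x y z _ _ _ hxz hyz =>
    rw [commutatorElement_mul_left_of_le_center hH]; exact C.mul_mem hxz hyz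
  | mul_right y z x _ _ _ hxy hxz =>
    refine symm ?_
    rw [commutatorElement_mul_left_of_le_center hH]; exact C.mul_mem (symm hxy) (symm hxz)
  | inv_left x y _ _ h =>
    rw [commutatorElement_inv_left_of_le_center hH]; exact C.inv_mem h
  | inv_right x y _ _ h =>
    refine symm ?_
    rw [commutatorElement_inv_left_of_le_center hH]; exact C.inv_mem (symm h)

end ClassTwo

theorem Pi.commutator_le_center {ι G : Type*} [Group G] (h2 : commutator G ≤ center G) :
    commutator (ι → G) ≤ center (ι → G) := by
  rw [commutator_def, commutator_le]
  refine fun f _ f' _ => mem_center_iff.mpr fun z => funext fun x => ?_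
  have := mem_center_iff.mp (commutatorElement_mem_center h2 (f x) (f' x)) (z x)
  simpa [commutatorElement_def] using this

theorem Int.exists_mul_modEq_prime_pow {p : ℕ} (hp : p.Prime) (m : ℕ) (a : ℤ) :
    ∃ (l : ℕ) (s s' : ℤ), s * s' ≡ 1 [ZMOD p ^ m] ∧ s * a ≡ p ^ l [ZMOD p ^ m] := by
  rcases eq_or_ne a 0 with rfl | ha
  · exact ⟨m, 1, 1, by simp, by simp [Int.ModEq]⟩
  have hp' : Prime (p : ℤ) := Nat.prime_iff_prime_int.mp hp
  obtain ⟨u, hau, hu⟩ := (Int.finiteMultiplicity_iff (a := (p : ℤ)).mpr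
    ⟨by simpa using hp.ne_one, ha⟩).exists_eq_pow_mul_and_not_dvd
  obtain ⟨s, t, hst⟩ := (((Irreducible.coprime_iff_not_dvd hp'.irreducible).mpr hu).symm.pow_right
    (n := m))
  have hsu : s * u ≡ 1 [ZMOD p ^ m] :=
    Int.modEq_iff_dvd.mpr ⟨t, by rw [← hst]; ring⟩
  refine ⟨multiplicity (p : ℤ) a, s, u, hsu, ?_⟩
  calc s * a = p ^ multiplicity (p : ℤ) a * (s * u) := by rw [mul_left_comm, ← hau]
    _ ≡ p ^ multiplicity (p : ℤ) a * 1 [ZMOD p ^ m] := hsu.mul_left _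
    _ = p ^ multiplicity (p : ℤ) a := mul_one _

section Exponent

variable {G : Type*} [Group G] {N : ℕ} (hexp : ∀ g : G, g ^ N = 1)
include hexp

theorem zpow_eq_zpow_of_modEq {a b : ℤ} (h : a ≡ b [ZMOD N]) (x : G) : x ^ a = x ^ b := by
  rw [zpow_eq_zpow_emod' a (hexp x), zpow_eq_zpow_emod' b (hexp x), h]

def zpowEquiv {s s' : ℤ} (h : s * s' ≡ 1 [ZMOD N]) : G ≃ G where
  toFun x := x ^ s
  invFun x := x ^ s'
  left_inv x := by
    change (x ^ s) ^ s' = x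
    rw [← zpow_mul, zpow_eq_zpow_of_modEq hexp h, zpow_one]
  right_inv x := by
    change (x ^ s') ^ s = x
    rw [← zpow_mul, mul_comm, zpow_eq_zpow_of_modEq hexp h, zpow_one]

end Exponent

section WordMap

variable {ι G : Type*} [Group G]

def wordMap : FreeGroup ι →* ((ι → G) → G) := FreeGroup.lift fun i g => g i

theorem wordMap_apply (w : FreeGroup ι) (g : ι → G) : wordMap w g = FreeGroup.lift g w := by
  have : (Pi.evalMonoidHom (fun _ => G) g).comp wordMap = FreeGroup.lift g :=
    FreeGroup.ext_hom _ _ fun i => by simp [wordMap]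
  exact DFunLike.congr_fun this w

theorem range_wordMap : (wordMap : FreeGroup ι →* ((ι → G) → G)).range =
    Subgroup.closure (Set.range fun i (g : ι → G) => g i) :=
  FreeGroup.range_lift_eq_closure

def substEquiv (e : FreeGroup ι ≃* FreeGroup ι) : (ι → G) ≃ (ι → G) :=
  FreeGroup.lift.trans (e.symm.monoidHomCongrLeftEquiv.trans FreeGroup.lift.symm)

theorem lift_substEquiv (e : FreeGroup ι ≃* FreeGroup ι) (g : ι → G) (w : FreeGroup ι) :
    FreeGroup.lift (substEquiv e g) w = FreeGroup.lift g (e w) := by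
  simp [substEquiv]

end WordMap

section PowerWord

variable {n : ℕ}

def powerWord (a : Fin n → ℤ) : FreeGroup (Fin n) :=
  ((List.finRange n).map fun i => FreeGroup.of i ^ a i).prod

theorem lift_powerWord {H : Type*} [Group H] (u : Fin n → H) (a : Fin n → ℤ) :
    FreeGroup.lift u (powerWord a) = ((List.finRange n).map fun i => u i ^ a i).prod := by
  simp [powerWord, map_list_prod, Function.comp_def]

theorem of_powerWord (a : Fin n → ℤ) :
    Abelianization.of (powerWord a) = ∏ i, Abelianization.of (FreeGroup.of i) ^ a i := by
  simp [powerWord, map_list_prod, Function.comp_def, Fin.prod_univ_def]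

theorem of_of_mul_powerWord_pow (i : Fin n) (t : Fin n → ℤ) (N : ℕ) :
    Abelianization.of ((FreeGroup.of i * powerWord t) ^ N) =
      Abelianization.of (powerWord fun k => N * ((Pi.single i 1 : Fin n → ℤ) k + t k)) := by
  rw [map_pow, map_mul, of_powerWord, of_powerWord, mul_pow, ← Finset.prod_pow]
  simp_rw [mul_add, zpow_add, Finset.prod_mul_distrib]
  congr 1
  · rw [Finset.prod_eq_single i (fun k _ hk => by simp [hk]) (by simp)]
    simp
  · refine Finset.prod_congr rfl fun k _ => ?_
    rw [mul_comm, zpow_mul, zpow_natCast]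

theorem of_powerWord_prime_pow (p : ℕ) {l : Fin n → ℕ} {k : Fin n} (hk : ∀ i, l k ≤ l i) :
    Abelianization.of (powerWord fun i => (p : ℤ) ^ l i) =
      Abelianization.of ((FreeGroup.of k *
        powerWord fun i => if i = k then 0 else (p : ℤ) ^ (l i - l k)) ^ p ^ l k) := by
  rw [of_of_mul_powerWord_pow]
  congr
  funext i
  rcases eq_or_ne i k with rfl | hik
  · simp
  · simp [hik, ← pow_add, Nat.add_sub_cancel' (hk i)]

theorem lift_update_powerWord {H : Type*} [Group H] (u : Fin n → H) (i : Fin n) (x : H)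
    {t : Fin n → ℤ} (ht : t i = 0) :
    FreeGroup.lift (Function.update u i x) (powerWord t) = FreeGroup.lift u (powerWord t) := by
  simp only [lift_powerWord]
  congr 1
  refine List.map_congr_left fun k _ => ?_
  rcases eq_or_ne k i with rfl | hk
  · simp [ht]
  · rw [Function.update_of_ne hk]

def transvection (i : Fin n) (t : Fin n → ℤ) (ht : t i = 0) :
    FreeGroup (Fin n) ≃* FreeGroup (Fin n) :=
  MonoidHom.toMulEquiv
    (FreeGroup.lift (Function.update FreeGroup.of i (FreeGroup.of i * (powerWord t)⁻¹)))
    (FreeGroup.lift (Function.update FreeGroup.of i (FreeGroup.of i * powerWord t)))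
    (FreeGroup.ext_hom _ _ fun k => by
      rcases eq_or_ne k i with rfl | hk
      · simp [lift_update_powerWord _ _ _ ht, FreeGroup.lift_of_apply]
      · simp [hk])
    (FreeGroup.ext_hom _ _ fun k => by
      rcases eq_or_ne k i with rfl | hk
      · simp [lift_update_powerWord _ _ _ ht, FreeGroup.lift_of_apply]
      · simp [hk])

theorem transvection_of_mul_powerWord (i : Fin n) (t : Fin n → ℤ) (ht : t i = 0) :
    transvection i t ht (FreeGroup.of i * powerWord t) = FreeGroup.of i := by
  simp [transvection, lift_update_powerWord _ _ _ ht, FreeGroup.lift_of_apply]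

theorem lift_zpow_powerWord_of_modEq {G : Type*} [Group G] {N : ℕ} (hexp : ∀ g : G, g ^ N = 1)
    {s a b : Fin n → ℤ} (h : ∀ i, s i * a i ≡ b i [ZMOD N]) (g : Fin n → G) :
    FreeGroup.lift (fun i => g i ^ s i) (powerWord a) = FreeGroup.lift g (powerWord b) := by
  simp only [lift_powerWord, ← zpow_mul]
  congr 1
  exact List.map_congr_left fun i _ => zpow_eq_zpow_of_modEq hexp (h i) (g i)

end PowerWord

section CommutatorWord

variable {n : ℕ} {G : Type*} [Group G]

def commutatorWord (hn : 0 < n) (β : Fin n → Fin n → ℤ) (γ : Fin n → ℤ) : FreeGroup (Fin n) :=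
  ((List.finRange n).map (fun (i : Fin n) =>
    ((List.finRange n).map (fun (j : Fin n) =>
      if 0 < (i : ℕ) ∧ (i : ℕ) < (j : ℕ) then
        ((FreeGroup.of i)⁻¹ * (FreeGroup.of j)⁻¹ * FreeGroup.of i * FreeGroup.of j) ^ (β i j)
      else 1)).prod)).prod *
  ((List.finRange n).map (fun (i : Fin n) =>
    if 0 < (i : ℕ) then
      ((FreeGroup.of (⟨0, hn⟩ : Fin n))⁻¹ * (FreeGroup.of i)⁻¹ *
        FreeGroup.of (⟨0, hn⟩ : Fin n) * FreeGroup.of i) ^ (γ i)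
    else 1)).prod

variable (h2 : commutator G ≤ center G) (hn : 0 < n)

def centralCommutator (a b : G) : center G :=
  ⟨⁅a, b⁆, commutatorElement_mem_center h2 a b⟩

include h2 hn

open scoped IsMulCommutative

/- The commutator `x⁻¹ y⁻¹ x y` of the statement is Mathlib's `⁅x⁻¹, y⁻¹⁆`. -/
theorem lift_commutatorWord (β : Fin n → Fin n → ℤ) (γ : Fin n → ℤ) (g : Fin n → G) :
    FreeGroup.lift g (commutatorWord hn β γ) =
      ((∏ i : Fin n, ∏ j : Fin n, if 0 < (i : ℕ) ∧ (i : ℕ) < (j : ℕ) then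
          centralCommutator h2 (g i)⁻¹ (g j)⁻¹ ^ β i j else 1) *
        ∏ i : Fin n, if 0 < (i : ℕ) then centralCommutator h2 (g ⟨0, hn⟩)⁻¹ (g i)⁻¹ ^ γ i else 1 :
        center G) := by
  simp only [Fin.prod_univ_def, Subgroup.coe_mul, Subgroup.val_list_prod, List.map_map]
  simp [commutatorWord, map_list_prod, Function.comp_def, apply_ite,
    centralCommutator, commutatorElement_def]

theorem lift_commutatorWord_zero (g : Fin n → G) :
    FreeGroup.lift g (commutatorWord hn 0 0) = 1 := by
  simp [lift_commutatorWord h2]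

theorem lift_commutatorWord_add (β β' : Fin n → Fin n → ℤ) (γ γ' : Fin n → ℤ)
    (g : Fin n → G) :
    FreeGroup.lift g (commutatorWord hn (β + β') (γ + γ')) =
      FreeGroup.lift g (commutatorWord hn β γ) * FreeGroup.lift g (commutatorWord hn β' γ') := by
  have ite_zpow_add : ∀ (P : Prop) [Decidable P] (z : center G) (a b : ℤ),
      (if P then z ^ (a + b) else 1) = (if P then z ^ a else 1) * (if P then z ^ b else 1) := by
    intros; split_ifs <;> simp [zpow_add]
  simp only [lift_commutatorWord h2, ← Subgroup.coe_mul, Pi.add_apply, ite_zpow_add,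
    Finset.prod_mul_distrib, mul_mul_mul_comm]

def commutatorWordMaps : Subgroup ((Fin n → G) → G) where
  carrier := {f | ∃ β γ, f = wordMap (commutatorWord hn β γ)}
  one_mem' := ⟨0, 0, funext fun g => by rw [wordMap_apply, lift_commutatorWord_zero h2]; rfl⟩
  mul_mem' := by
    rintro _ _ ⟨β, γ, rfl⟩ ⟨β', γ', rfl⟩
    exact ⟨β + β', γ + γ', funext fun g => by
      simp only [Pi.mul_apply, wordMap_apply, lift_commutatorWord_add h2 hn]⟩
  inv_mem' := by
    rintro _ ⟨β, γ, rfl⟩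
    refine ⟨-β, -γ, funext fun g => ?_⟩
    simp only [Pi.inv_apply, wordMap_apply]
    refine inv_eq_of_mul_eq_one_right ?_
    rw [← lift_commutatorWord_add h2]
    simpa using lift_commutatorWord_zero h2 hn g

theorem commutatorElement_coord_mem_of_lt {i j : Fin n} (hij : i < j) :
    ⁅fun g : Fin n → G => g i, fun g => g j⁆ ∈ commutatorWordMaps h2 hn := by
  have hcomm : ∀ g : Fin n → G, ⁅fun g : Fin n → G => g i, fun g => g j⁆ g =
      centralCommutator h2 (g i)⁻¹ (g j)⁻¹ := fun g => by
    simp [centralCommutator, commutatorElement_inv_inv_of_le_center h2, commutatorElement_def]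
  rcases Nat.eq_zero_or_pos i with hi | hi
  · obtain rfl : i = ⟨0, hn⟩ := Fin.ext hi
    refine ⟨0, Pi.single j 1, funext fun g => ?_⟩
    rw [hcomm, wordMap_apply, lift_commutatorWord h2]
    simp only [Pi.zero_apply, zpow_zero, ite_self, Finset.prod_const_one, one_mul]
    rw [Finset.prod_eq_single j (fun k _ hk => by simp [hk]) (by simp)]
    simp [(show 0 < (j : ℕ) from hij).ne']
  · refine ⟨Pi.single i (Pi.single j 1), 0, funext fun g => ?_⟩
    rw [hcomm, wordMap_apply, lift_commutatorWord h2]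
    simp only [Pi.zero_apply, zpow_zero, ite_self, Finset.prod_const_one, mul_one]
    rw [Finset.prod_eq_single i (fun k _ hk => by simp [hk]) (by simp),
      Finset.prod_eq_single j (fun k _ hk => by simp [hk]) (by simp)]
    simp [hij, hi]

theorem commutatorElement_coord_mem (i j : Fin n) :
    ⁅fun g : Fin n → G => g i, fun g => g j⁆ ∈ commutatorWordMaps h2 hn := by
  rcases lt_trichotomy i j with h | rfl | h
  · exact commutatorElement_coord_mem_of_lt h2 hn h
  · rw [commutatorElement_self]; exact one_mem _
  · rw [← commutatorElement_inv]; exact inv_mem (commutatorElement_coord_mem_of_lt h2 hn h)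

theorem map_commutator_le_commutatorWordMaps :
    (commutator (FreeGroup (Fin n))).map wordMap ≤ commutatorWordMaps h2 hn := by
  rw [commutator_def, map_commutator, ← MonoidHom.range_eq_map, range_wordMap]
  refine commutator_closure_le_of_le_center (Pi.commutator_le_center h2) ?_
  rintro _ ⟨i, rfl⟩ _ ⟨j, rfl⟩
  exact commutatorElement_coord_mem h2 hn i j

theorem exists_lift_eq_mul_lift_commutatorWord {w w' : FreeGroup (Fin n)}
    (h : Abelianization.of w = Abelianization.of w') :
    ∃ β γ, ∀ g : Fin n → G,
      FreeGroup.lift g w = FreeGroup.lift g w' * FreeGroup.lift g (commutatorWord hn β γ) := by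
  have hmem : w'⁻¹ * w ∈ commutator (FreeGroup (Fin n)) := by
    rw [← Abelianization.ker_of, MonoidHom.mem_ker, map_mul, map_inv, h, inv_mul_cancel]
  obtain ⟨β, γ, hβγ⟩ := map_commutator_le_commutatorWordMaps h2 hn (mem_map_of_mem _ hmem)
  refine ⟨β, γ, fun g => ?_⟩
  have := congrFun hβγ g
  rw [wordMap_apply, wordMap_apply, map_mul, map_inv] at this
  rw [← this, mul_inv_cancel_left]

end CommutatorWord

theorem power_word_G_equivalent_general {p : ℕ} [Fact p.Prime] (m : ℕ)
    {n : ℕ} (hn : 0 < n) (α : Fin n → ℤ)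
    {G : Type*} [Group G]
    (h2 : commutator G ≤ Subgroup.center G)
    (hexp : ∀ g : G, g ^ (p ^ m) = 1) :
    ∃ (l : ℕ) (β : Fin n → Fin n → ℤ) (γ : Fin n → ℤ),
      ∀ c : G,
        Nat.card {g : Fin n → G // (FreeGroup.lift g)
          (((List.finRange n).map (fun (i : Fin n) => FreeGroup.of i ^ α i)).prod) = c} =
        Nat.card {g : Fin n → G // (FreeGroup.lift g)
          (FreeGroup.of (⟨0, hn⟩ : Fin n) ^ (p ^ l) *
            ((List.finRange n).map (fun (i : Fin n) =>
              ((List.finRange n).map (fun (j : Fin n) =>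
                if 0 < (i : ℕ) ∧ (i : ℕ) < (j : ℕ) then
                  ((FreeGroup.of i)⁻¹ * (FreeGroup.of j)⁻¹ *
                    FreeGroup.of i * FreeGroup.of j) ^ (β i j)
                else 1)).prod)).prod *
            ((List.finRange n).map (fun (i : Fin n) =>
              if 0 < (i : ℕ) then
                ((FreeGroup.of (⟨0, hn⟩ : Fin n))⁻¹ * (FreeGroup.of i)⁻¹ *
                  FreeGroup.of (⟨0, hn⟩ : Fin n) * FreeGroup.of i) ^ (γ i)
              else 1)).prod) = c} := by
  choose l s s' hss' hsα using fun i => Int.exists_mul_modEq_prime_pow (Fact.out : p.Prime) m (α i)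
  obtain ⟨k, -, hk⟩ := Finset.univ.exists_min_image l ⟨⟨0, hn⟩, Finset.mem_univ _⟩
  set t : Fin n → ℤ := fun i => if i = k then 0 else (p : ℤ) ^ (l i - l k)
  let e := (transvection k t (if_pos rfl)).trans (FreeGroup.freeGroupCongr (Equiv.swap k ⟨0, hn⟩))
  have hab : Abelianization.of (e (powerWord fun i => (p : ℤ) ^ l i)) =
      Abelianization.of (FreeGroup.of ⟨0, hn⟩ ^ p ^ l k) := by
    rw [← MulEquiv.coe_toMonoidHom, ← Abelianization.map_of,
      of_powerWord_prime_pow p fun i => hk i (Finset.mem_univ i), Abelianization.map_of]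
    simp [e, t, transvection_of_mul_powerWord]
  obtain ⟨β, γ, hβγ⟩ := exists_lift_eq_mul_lift_commutatorWord h2 hn hab
  have hs : ∀ i, s i * s' i ≡ 1 [ZMOD (p ^ m : ℕ)] := by exact_mod_cast hss'
  let Φ := (substEquiv e).trans (Equiv.piCongrRight fun i => zpowEquiv hexp (hs i))
  have hΦ : ∀ g, FreeGroup.lift (Φ g) (powerWord α) =
      FreeGroup.lift g (FreeGroup.of ⟨0, hn⟩ ^ p ^ l k * commutatorWord hn β γ) := by
    intro g
    rw [map_mul, ← hβγ, ← lift_substEquiv]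
    exact lift_zpow_powerWord_of_modEq hexp (by exact_mod_cast hsα) _
  refine ⟨l k, β, γ, fun c => (Nat.card_congr (Equiv.subtypeEquiv Φ fun g => ?_)).symm⟩
  change _ ↔ FreeGroup.lift (Φ g) (powerWord α) = c
  rw [hΦ, commutatorWord, mul_assoc]

/-- Let `w = x₁^(α₁) ⋯ xₙ^(αₙ)` in the free group on `n` generators.
For any finite `p`-group `G` of nilpotency class at most 2 with exponent dividing
`p^m`, there exist `l : ℕ`, integers `β i j` (for `1 < i < j ≤ n`) and `γ i`
(for `2 ≤ i ≤ n`) such that `w` is `G`-equivalent to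
`v = x₁^(p^l) * (∏_{1<i<j} [xᵢ,xⱼ]^(β i j)) * (∏_{i≥2} [x₁,xᵢ]^(γ i))`,
where `[x,y] = x⁻¹y⁻¹xy`.  (Indices are 0-based: `x₁` is `FreeGroup.of ⟨0, hn⟩`.) -/
theorem power_word_G_equivalent {p : ℕ} [Fact p.Prime] (m : ℕ)
    {n : ℕ} (hn : 0 < n) (α : Fin n → ℤ)
    {G : Type*} [Group G] [Finite G] (hG : IsPGroup p G)
    (h2 : commutator G ≤ Subgroup.center G)
    (hexp : ∀ g : G, g ^ (p ^ m) = 1) :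
    ∃ (l : ℕ) (β : Fin n → Fin n → ℤ) (γ : Fin n → ℤ),
      ∀ c : G,
        Nat.card {g : Fin n → G // (FreeGroup.lift g)
          (((List.finRange n).map (fun (i : Fin n) => FreeGroup.of i ^ α i)).prod) = c} =
        Nat.card {g : Fin n → G // (FreeGroup.lift g)
          (FreeGroup.of (⟨0, hn⟩ : Fin n) ^ (p ^ l) *
            ((List.finRange n).map (fun (i : Fin n) =>
              ((List.finRange n).map (fun (j : Fin n) =>
                if 0 < (i : ℕ) ∧ (i : ℕ) < (j : ℕ) then
                  ((FreeGroup.of i)⁻¹ * (FreeGroup.of j)⁻¹ *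
                    FreeGroup.of i * FreeGroup.of j) ^ (β i j)
                else 1)).prod)).prod *
            ((List.finRange n).map (fun (i : Fin n) =>
              if 0 < (i : ℕ) then
                ((FreeGroup.of (⟨0, hn⟩ : Fin n))⁻¹ * (FreeGroup.of i)⁻¹ *
                  FreeGroup.of (⟨0, hn⟩ : Fin n) * FreeGroup.of i) ^ (γ i)
              else 1)).prod) = c} :=
  power_word_G_equivalent_general m hn α h2 hexp
end
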